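/- arXiv:2009.13980 — 4 statements merged into one kernel-verified Lean document; each statement's English description precedes it below -/
import Mathlib

section
/- Let k be a field, n a positive integer, and A ∈ GL_n(k). Set B = A·Φ_n⁻¹. Then B·σ(B) = (−1)^{n−1}·A·(A⁻¹)ᵀ. Consequently, B·σ(B) = (−1)^{n−1}·I_n if and only if Aᵀ = A, and B·σ(B) = I_n if and only if Aᵀ = (−1)^{n−1}·A. -/
/-!
`Φ_n` is a signed permutation matrix with `Φ_n Φ_nᵀ = 1` and `Φ_nᵀ = (-1)^(n-1) Φ_n`. For any
invertible `P` with `Pᵀ = c P` and `B = A P⁻¹`, one gets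
`B · P (Bᵀ)⁻¹ P⁻¹ = A P⁻¹ P (A⁻¹)ᵀ Pᵀ P⁻¹ = c · A (A⁻¹)ᵀ`, and `A (A⁻¹)ᵀ = c · 1` amounts to
`A = c Aᵀ`. Since `(-1)^(n-1)` squares to `1`, both equivalences follow.
-/

open Matrix

/-- The matrix `Φ_n` whose `(i,j)` entry (1-indexed) is `(-1)^(i+1)` if `i + j = n + 1`
and `0` otherwise. -/
def Phi (k : Type*) [CommRing k] (n : ℕ) : Matrix (Fin n) (Fin n) k :=
  Matrix.of fun i j => if (i : ℕ) + (j : ℕ) + 1 = n then (-1 : k) ^ (i : ℕ) else 0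

lemma smul_eq_iff_eq_smul_of_mul_self_eq_one {R M : Type*} [Monoid R] [MulAction R M] {c : R}
    (hc : c * c = 1) {x y : M} : c • x = y ↔ x = c • y := by
  constructor <;> rintro rfl <;> rw [smul_smul, hc, one_smul]

lemma neg_one_pow_mul_self {R : Type*} [Monoid R] [HasDistribNeg R] (m : ℕ) :
    (-1 : R) ^ m * (-1 : R) ^ m = 1 := by
  rw [← pow_add, ← two_mul, pow_mul, neg_one_sq, one_pow]

section Matrix

variable {ι R : Type*} [Fintype ι] [DecidableEq ι] [CommRing R]

lemma mul_conj_inv_transpose_of_transpose_eq_smul {P : Matrix ι ι R} (hP : IsUnit P) {c : R}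
    (hPt : Pᵀ = c • P) (A : Matrix ι ι R) :
    A * P⁻¹ * (P * ((A * P⁻¹)ᵀ)⁻¹ * P⁻¹) = c • (A * (A⁻¹)ᵀ) := by
  have hdet : IsUnit P.det := (isUnit_iff_isUnit_det P).mp hP
  have hBt : ((A * P⁻¹)ᵀ)⁻¹ = (A⁻¹)ᵀ * Pᵀ := by
    rw [transpose_mul, Matrix.mul_inv_rev, transpose_nonsing_inv P, transpose_nonsing_inv A,
      nonsing_inv_nonsing_inv _ (by rwa [det_transpose])]
  rw [hBt, hPt, Matrix.mul_smul, Matrix.mul_smul, Matrix.smul_mul, Matrix.mul_smul]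
  congr 1
  simp only [Matrix.mul_assoc]
  rw [nonsing_inv_mul_cancel_left P _ hdet, mul_nonsing_inv P hdet, Matrix.mul_one]

lemma mul_inv_transpose_eq_smul_one_iff {A : Matrix ι ι R} (hA : IsUnit A) (c : R) :
    A * (A⁻¹)ᵀ = c • 1 ↔ Aᵀ = c • A := by
  have := hA.invertible
  rw [transpose_nonsing_inv, mul_inv_eq_iff_eq_mul_of_invertible, Matrix.smul_mul, Matrix.one_mul,
    ← transpose_inj, transpose_smul, transpose_transpose, eq_comm]

end Matrix

section Phi

variable (k : Type*) [CommRing k] (n : ℕ)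

lemma Phi_apply (i j : Fin n) :
    Phi k n i j = if j = i.rev then (-1 : k) ^ (i : ℕ) else 0 := by
  have : (i : ℕ) + j + 1 = n ↔ j = i.rev := by
    rw [Fin.ext_iff, Fin.val_rev]
    omega
  simp only [Phi, of_apply, this]

lemma neg_one_pow_val_rev (i : Fin n) :
    (-1 : k) ^ (i.rev : ℕ) = (-1) ^ (n - 1) * (-1) ^ (i : ℕ) := by
  have : n - 1 = i.rev + i := by rw [Fin.val_rev]; omega
  rw [this, pow_add, mul_assoc, neg_one_pow_mul_self, mul_one]

lemma Phi_mul_transpose : Phi k n * (Phi k n)ᵀ = 1 := by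
  ext i j
  simp only [mul_apply, transpose_apply, Phi_apply, ite_mul, zero_mul, Finset.sum_ite_eq',
    Finset.mem_univ, if_true, Fin.rev_inj, mul_ite, mul_zero, one_apply, eq_comm (a := j)]
  split_ifs with h
  · subst h
    exact neg_one_pow_mul_self _
  · rfl

lemma isUnit_Phi : IsUnit (Phi k n) :=
  (isUnit_iff_isUnit_det _).mpr (isUnit_det_of_right_inverse (Phi_mul_transpose k n))

lemma transpose_Phi : (Phi k n)ᵀ = (-1 : k) ^ (n - 1) • Phi k n := by
  ext i j
  simp only [transpose_apply, Matrix.smul_apply, smul_eq_mul, Phi_apply, mul_ite, mul_zero,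
    ← Fin.rev_eq_iff, eq_comm (a := j.rev)]
  split_ifs with h
  · subst h
    exact neg_one_pow_val_rev k n i
  · rfl

end Phi

theorem stmt_4_general (k : Type*) [Field k] (n : ℕ)
    (A : Matrix (Fin n) (Fin n) k) (hA : IsUnit A)
    (B : Matrix (Fin n) (Fin n) k) (hB : B = A * (Phi k n)⁻¹) :
    B * (Phi k n * (Bᵀ)⁻¹ * (Phi k n)⁻¹) = ((-1 : k) ^ (n - 1)) • (A * (A⁻¹)ᵀ) ∧
    (B * (Phi k n * (Bᵀ)⁻¹ * (Phi k n)⁻¹) =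
        ((-1 : k) ^ (n - 1)) • (1 : Matrix (Fin n) (Fin n) k) ↔ Aᵀ = A) ∧
    (B * (Phi k n * (Bᵀ)⁻¹ * (Phi k n)⁻¹) = 1 ↔ Aᵀ = ((-1 : k) ^ (n - 1)) • A) := by
  have hsign : (-1 : k) ^ (n - 1) * (-1) ^ (n - 1) = 1 := neg_one_pow_mul_self _
  have key := mul_conj_inv_transpose_of_transpose_eq_smul (isUnit_Phi k n) (transpose_Phi k n) A
  rw [← hB] at key
  refine ⟨key, ?_, ?_⟩
  · rw [key, smul_eq_iff_eq_smul_of_mul_self_eq_one hsign, smul_smul, hsign]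
    simpa only [one_smul] using mul_inv_transpose_eq_smul_one_iff hA 1
  · rw [key, smul_eq_iff_eq_smul_of_mul_self_eq_one hsign, mul_inv_transpose_eq_smul_one_iff hA]

/-- for `A ∈ GL_n(k)` and `B = A·Φ_n⁻¹`, with `σ(B) = Φ_n·(Bᵀ)⁻¹·Φ_n⁻¹`,
one has `B·σ(B) = (−1)^{n−1}·A·(A⁻¹)ᵀ`; consequently `B·σ(B) = (−1)^{n−1}·I_n ↔ Aᵀ = A`
and `B·σ(B) = I_n ↔ Aᵀ = (−1)^{n−1}·A`. -/
theorem stmt_4 (k : Type*) [Field k] (n : ℕ) (hn : 0 < n)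
    (A : Matrix (Fin n) (Fin n) k) (hA : IsUnit A)
    (B : Matrix (Fin n) (Fin n) k) (hB : B = A * (Phi k n)⁻¹) :
    B * (Phi k n * (Bᵀ)⁻¹ * (Phi k n)⁻¹) = ((-1 : k) ^ (n - 1)) • (A * (A⁻¹)ᵀ) ∧
    (B * (Phi k n * (Bᵀ)⁻¹ * (Phi k n)⁻¹) =
        ((-1 : k) ^ (n - 1)) • (1 : Matrix (Fin n) (Fin n) k) ↔ Aᵀ = A) ∧
    (B * (Phi k n * (Bᵀ)⁻¹ * (Phi k n)⁻¹) = 1 ↔ Aᵀ = ((-1 : k) ^ (n - 1)) • A) :=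
  stmt_4_general k n A hA B hB
end

section
/- Let k be a field, H a group, σ: H → H a group automorphism with σ∘σ = id, ρ: H → GL_n(k) a group homomorphism, and χ: H → kˣ a group homomorphism with χ∘σ = χ. Assume Schur's property: every n×n matrix B over k satisfying B·ρ(h) = ρ(h)·B for all h ∈ H is a scalar multiple of the identity. If A ∈ GL_n(k) satisfies ρ(σ(h)) = χ(h)·A·(ρ(h)ᵀ)⁻¹·A⁻¹ for all h ∈ H, then there exists λ ∈ k with λ² = 1 and Aᵀ = λ·A. -/
/-!
Write the hypothesis as `ρ(σ h) · A · ρ(h)ᵀ = χ(h) · A`. Replacing `h` by `σ h` and, separately,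
transposing shows that `A` and `Aᵀ` satisfy the same relation `ρ(h) · X · ρ(σ h)ᵀ = χ(h) · X`,
which forces `Aᵀ A⁻¹` to commute with every `ρ(h)`. By Schur's property `Aᵀ = λ A`, and
transposing once more gives `A = λ² A`, so `λ² = 1`.
-/

open Matrix

namespace Matrix

variable {m R : Type*} [Fintype m] [DecidableEq m] [CommRing R]

theorem commute_mul_nonsing_inv_of_mul_mul_eq_smul {g A B C : Matrix m m R} {c : R}
    (hA : IsUnit A) (hC : IsUnit C) (hgA : g * A * C = c • A) (hgB : g * B * C = c • B) :
    Commute (B * A⁻¹) g := by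
  have hdA : IsUnit A.det := (isUnit_iff_isUnit_det A).mp hA
  refine (hA.mul hC).mul_right_cancel ?_
  calc B * A⁻¹ * g * (A * C) = B * A⁻¹ * (g * A * C) := by simp only [Matrix.mul_assoc]
    _ = c • B := by rw [hgA, mul_smul_comm, nonsing_inv_mul_cancel_right _ _ hdA]
    _ = g * (B * A⁻¹) * (A * C) := by
      rw [← hgB]
      simp only [Matrix.mul_assoc, nonsing_inv_mul_cancel_left _ _ hdA]

theorem sq_eq_one_of_transpose_eq_smul [Nonempty m] {A : Matrix m m R} {a : R}
    (hA : IsUnit A) (h : Aᵀ = a • A) : a ^ 2 = 1 := by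
  have hdA : IsUnit A.det := (isUnit_iff_isUnit_det A).mp hA
  have hsq : (a ^ 2) • A = A := by
    conv_rhs => rw [← transpose_transpose A, h, transpose_smul, h, smul_smul, ← sq]
  have hsq_one : (a ^ 2) • (1 : Matrix m m R) = 1 := by
    rw [← mul_nonsing_inv A hdA, ← smul_mul_assoc, hsq]
  obtain ⟨i⟩ := ‹Nonempty m›
  simpa using congrFun (congrFun hsq_one i) i

end Matrix

/-- well-definedness of the Bellaïche–Chenevier sign: if `ρ` satisfies
Schur's property and `A ∈ GL_n(k)` satisfies
`ρ(σ(h)) = χ(h)·A·(ρ(h)ᵀ)⁻¹·A⁻¹` for all `h`, then `Aᵀ = λ·A` with `λ² = 1`. -/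
theorem stmt_7 (k : Type*) [Field k] (n : ℕ) (H : Type*) [Group H]
    (σ : H →* H) (hσ : ∀ h, σ (σ h) = h)
    (ρ : H →* GL (Fin n) k)
    (χ : H →* kˣ) (hχ : ∀ h, χ (σ h) = χ h)
    (schur : ∀ B : Matrix (Fin n) (Fin n) k,
      (∀ h, B * (ρ h : Matrix (Fin n) (Fin n) k) = (ρ h : Matrix (Fin n) (Fin n) k) * B) →
      ∃ a : k, B = a • (1 : Matrix (Fin n) (Fin n) k))
    (A : Matrix (Fin n) (Fin n) k) (hA : IsUnit A)
    (hpol : ∀ h, (ρ (σ h) : Matrix (Fin n) (Fin n) k) =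
      (χ h : k) • (A * ((ρ h : Matrix (Fin n) (Fin n) k)ᵀ)⁻¹ * A⁻¹)) :
    ∃ lam : k, lam ^ 2 = 1 ∧ Aᵀ = lam • A := by
  rcases isEmpty_or_nonempty (Fin n) with _ | _
  · exact ⟨1, one_pow 2, Subsingleton.elim _ _⟩
  have hdA : IsUnit A.det := (isUnit_iff_isUnit_det A).mp hA
  have hρT : ∀ h, IsUnit (ρ h : Matrix (Fin n) (Fin n) k)ᵀ := fun h =>
    (isUnit_transpose _).mpr (ρ h).isUnit
  have hsandwich : ∀ h, (ρ (σ h) : Matrix (Fin n) (Fin n) k) * A * (ρ h : Matrix _ _ k)ᵀ =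
      (χ h : k) • A := fun h => by
    rw [hpol h, smul_mul_assoc, smul_mul_assoc, nonsing_inv_mul_cancel_right _ _ hdA,
      nonsing_inv_mul_cancel_right _ _ ((isUnit_iff_isUnit_det _).mp (hρT h))]
  have comm : ∀ h, Aᵀ * A⁻¹ * (ρ h : Matrix (Fin n) (Fin n) k) =
      (ρ h : Matrix (Fin n) (Fin n) k) * (Aᵀ * A⁻¹) := fun h =>
    (commute_mul_nonsing_inv_of_mul_mul_eq_smul hA (hρT (σ h))
      (by simpa only [hσ, hχ] using hsandwich (σ h))
      (by simpa only [transpose_mul, transpose_smul, transpose_transpose, Matrix.mul_assoc]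
        using congrArg transpose (hsandwich h))).eq
  obtain ⟨a, ha⟩ := schur _ comm
  have hAt : Aᵀ = a • A :=
    calc Aᵀ = Aᵀ * A⁻¹ * A := (nonsing_inv_mul_cancel_right A Aᵀ hdA).symm
      _ = a • A := by rw [ha, smul_mul_assoc, Matrix.one_mul]
  exact ⟨a, sq_eq_one_of_transpose_eq_smul hA hAt, hAt⟩
end

section
/- Let k be a field, H a group, σ: H → H a group automorphism with σ∘σ = id, and χ: H → kˣ a group homomorphism. Let r: H → GL_n(k) be a group homomorphism and B ∈ GL_n(k) with Bᵀ = −B such that r(σ(h)) = χ(h)·B·(r(h)ᵀ)⁻¹·B⁻¹ for all h ∈ H. Define ρ: H → GL_{2n}(k) by ρ(h) = block-diagonal(r(h), r(h)). Then both A₁ = block-diagonal(B, B) and A₂ = [[0, −B],[B, 0]] are invertible and satisfy ρ(σ(h)) = χ(h)·A_i·(ρ(h)ᵀ)⁻¹·A_i⁻¹ for all h ∈ H, while A₁ᵀ = −A₁ and A₂ᵀ = A₂. -/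
/-!
Everything is computed blockwise: conjugating `blockdiag(X, Y)` by `blockdiag(P, Q)` gives
`blockdiag(P X P⁻¹, Q Y Q⁻¹)`, and conjugating it by `[[0, P], [Q, 0]]` gives
`blockdiag(P Y P⁻¹, Q X Q⁻¹)`, which is harmless when `X = Y`. Since `B` and `-B` induce the
same conjugation, both `blockdiag(B, B)` and `[[0, -B], [B, 0]]` polarise `r ⊕ r`, and
`Bᵀ = -B` makes the first antisymmetric and the second symmetric.
-/

open Matrix

namespace Matrix

variable {k H m m' : Type*} [Field k] [Fintype m] [DecidableEq m] [Fintype m'] [DecidableEq m']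

def IsPolarization (σ : H → H) (χ : H → k) (ρ : H → Matrix m m k) (A : Matrix m m k) : Prop :=
  IsUnit A ∧ ∀ h, ρ (σ h) = χ h • (A * (ρ h)ᵀ⁻¹ * A⁻¹)

theorem transpose_inv_fromBlocks_diagonal (X : Matrix m m k) (Y : Matrix m' m' k)
    (hX : IsUnit X) (hY : IsUnit Y) :
    (fromBlocks X 0 0 Y)ᵀ⁻¹ = fromBlocks Xᵀ⁻¹ 0 0 Yᵀ⁻¹ := by
  rw [fromBlocks_transpose, transpose_zero, transpose_zero,
    inv_fromBlocks_zero₂₁_of_isUnit_iff _ _ _ (by simp [hX, hY])]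
  simp

theorem fromBlocks_antidiagonal_mul_inv {P Q : Matrix m m k} (hP : IsUnit P) (hQ : IsUnit Q) :
    fromBlocks 0 P Q 0 * fromBlocks 0 Q⁻¹ P⁻¹ 0 = 1 := by
  rw [fromBlocks_multiply, mul_nonsing_inv _ ((isUnit_iff_isUnit_det P).mp hP),
    mul_nonsing_inv _ ((isUnit_iff_isUnit_det Q).mp hQ)]
  simp

theorem inv_fromBlocks_antidiagonal {P Q : Matrix m m k} (hP : IsUnit P) (hQ : IsUnit Q) :
    (fromBlocks 0 P Q 0)⁻¹ = fromBlocks 0 Q⁻¹ P⁻¹ 0 :=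
  inv_eq_right_inv (fromBlocks_antidiagonal_mul_inv hP hQ)

theorem isUnit_fromBlocks_antidiagonal {P Q : Matrix m m k} (hP : IsUnit P) (hQ : IsUnit Q) :
    IsUnit (fromBlocks 0 P Q 0) :=
  IsUnit.of_mul_eq_one _ (fromBlocks_antidiagonal_mul_inv hP hQ)

namespace IsPolarization

variable {σ : H → H} {χ : H → k}

theorem neg {ρ : H → Matrix m m k} {A : Matrix m m k} (hA : IsPolarization σ χ ρ A) :
    IsPolarization σ χ ρ (-A) := by
  have hinv : (-A)⁻¹ = -A⁻¹ :=
    inv_eq_right_inv (by rw [neg_mul_neg, mul_nonsing_inv _ ((isUnit_iff_isUnit_det A).mp hA.1)])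
  refine ⟨hA.1.neg, fun h => ?_⟩
  rw [hinv, hA.2 h, Matrix.neg_mul, neg_mul_neg]

theorem fromBlocks_diagonal {r : H → GL m k} {s : H → GL m' k} {P : Matrix m m k}
    {Q : Matrix m' m' k} (hP : IsPolarization σ χ (fun h => r h) P)
    (hQ : IsPolarization σ χ (fun h => s h) Q) :
    IsPolarization σ χ (fun h => fromBlocks (r h : Matrix m m k) 0 0 (s h))
      (fromBlocks P 0 0 Q) := by
  refine ⟨isUnit_fromBlocks_zero₂₁.mpr ⟨hP.1, hQ.1⟩, fun h => ?_⟩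
  rw [transpose_inv_fromBlocks_diagonal _ _ (r h).isUnit (s h).isUnit,
    inv_fromBlocks_zero₂₁_of_isUnit_iff _ _ _ (by simp [hP.1, hQ.1])]
  simp only [fromBlocks_multiply, fromBlocks_smul, fromBlocks_inj, Matrix.zero_mul,
    Matrix.mul_zero, add_zero, zero_add, neg_zero, smul_zero, true_and]
  exact ⟨hP.2 h, hQ.2 h⟩

theorem fromBlocks_antidiagonal {r : H → GL m k} {P Q : Matrix m m k}
    (hP : IsPolarization σ χ (fun h => r h) P) (hQ : IsPolarization σ χ (fun h => r h) Q) :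
    IsPolarization σ χ (fun h => fromBlocks (r h : Matrix m m k) 0 0 (r h))
      (fromBlocks 0 P Q 0) := by
  refine ⟨isUnit_fromBlocks_antidiagonal hP.1 hQ.1, fun h => ?_⟩
  rw [transpose_inv_fromBlocks_diagonal _ _ (r h).isUnit (r h).isUnit,
    inv_fromBlocks_antidiagonal hP.1 hQ.1]
  simp only [fromBlocks_multiply, fromBlocks_smul, fromBlocks_inj, Matrix.zero_mul,
    Matrix.mul_zero, add_zero, zero_add, smul_zero, true_and]
  exact ⟨hP.2 h, hQ.2 h⟩

end IsPolarization

end Matrix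

theorem stmt_12_general (k : Type*) [Field k] (n : ℕ) (H : Type*) [Group H]
    (σ : H →* H)
    (χ : H →* kˣ)
    (r : H →* GL (Fin n) k)
    (B : Matrix (Fin n) (Fin n) k) (hB : IsUnit B) (hBt : Bᵀ = -B)
    (hpol : ∀ h, (r (σ h) : Matrix (Fin n) (Fin n) k) =
      (χ h : k) • (B * ((r h : Matrix (Fin n) (Fin n) k)ᵀ)⁻¹ * B⁻¹))
    (ρ : H → Matrix (Fin n ⊕ Fin n) (Fin n ⊕ Fin n) k)
    (hρ : ∀ h, ρ h = Matrix.fromBlocks (r h : Matrix (Fin n) (Fin n) k) 0 0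
      (r h : Matrix (Fin n) (Fin n) k))
    (A₁ A₂ : Matrix (Fin n ⊕ Fin n) (Fin n ⊕ Fin n) k)
    (hA₁ : A₁ = Matrix.fromBlocks B 0 0 B)
    (hA₂ : A₂ = Matrix.fromBlocks 0 (-B) B 0) :
    IsUnit A₁ ∧ IsUnit A₂ ∧
    (∀ h, ρ (σ h) = (χ h : k) • (A₁ * ((ρ h)ᵀ)⁻¹ * A₁⁻¹)) ∧
    (∀ h, ρ (σ h) = (χ h : k) • (A₂ * ((ρ h)ᵀ)⁻¹ * A₂⁻¹)) ∧
    A₁ᵀ = -A₁ ∧ A₂ᵀ = A₂ := by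
  have hB_pol : IsPolarization σ (fun h => (χ h : k)) (fun h => r h) B := ⟨hB, hpol⟩
  obtain rfl : ρ = fun h => fromBlocks (r h : Matrix (Fin n) (Fin n) k) 0 0 (r h) := funext hρ
  subst hA₁ hA₂
  obtain ⟨hA₁_unit, hA₁_pol⟩ := hB_pol.fromBlocks_diagonal hB_pol
  obtain ⟨hA₂_unit, hA₂_pol⟩ := hB_pol.neg.fromBlocks_antidiagonal hB_pol
  refine ⟨hA₁_unit, hA₂_unit, hA₁_pol, hA₂_pol, ?_, ?_⟩
  · simp [fromBlocks_transpose, hBt, fromBlocks_neg]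
  · simp [fromBlocks_transpose, hBt]

/-- two polarisations of opposite signs on `r ⊕ r`: if `B` is
antisymmetric and polarises `r`, then both `A₁ = blockdiag(B, B)` and
`A₂ = [[0, −B],[B, 0]]` polarise `ρ = blockdiag(r, r)`, with `A₁ᵀ = −A₁` and
`A₂ᵀ = A₂`. -/
theorem stmt_12 (k : Type*) [Field k] (n : ℕ) (H : Type*) [Group H]
    (σ : H →* H) (hσ : ∀ h, σ (σ h) = h)
    (χ : H →* kˣ)
    (r : H →* GL (Fin n) k)
    (B : Matrix (Fin n) (Fin n) k) (hB : IsUnit B) (hBt : Bᵀ = -B)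
    (hpol : ∀ h, (r (σ h) : Matrix (Fin n) (Fin n) k) =
      (χ h : k) • (B * ((r h : Matrix (Fin n) (Fin n) k)ᵀ)⁻¹ * B⁻¹))
    (ρ : H → Matrix (Fin n ⊕ Fin n) (Fin n ⊕ Fin n) k)
    (hρ : ∀ h, ρ h = Matrix.fromBlocks (r h : Matrix (Fin n) (Fin n) k) 0 0
      (r h : Matrix (Fin n) (Fin n) k))
    (A₁ A₂ : Matrix (Fin n ⊕ Fin n) (Fin n ⊕ Fin n) k)
    (hA₁ : A₁ = Matrix.fromBlocks B 0 0 B)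
    (hA₂ : A₂ = Matrix.fromBlocks 0 (-B) B 0) :
    IsUnit A₁ ∧ IsUnit A₂ ∧
    (∀ h, ρ (σ h) = (χ h : k) • (A₁ * ((ρ h)ᵀ)⁻¹ * A₁⁻¹)) ∧
    (∀ h, ρ (σ h) = (χ h : k) • (A₂ * ((ρ h)ᵀ)⁻¹ * A₂⁻¹)) ∧
    A₁ᵀ = -A₁ ∧ A₂ᵀ = A₂ :=
  stmt_12_general k n H σ χ r B hB hBt hpol ρ hρ A₁ A₂ hA₁ hA₂
end

section
/- Let k be a field, H a group, σ: H → H a group automorphism with σ∘σ = id, and χ: H → kˣ a group homomorphism. Let r: H → GL_m(k) and s: H → GL_p(k) be group homomorphisms and set ρ(h) = block-diagonal(r(h), s(h)) ∈ GL_{m+p}(k). Suppose A ∈ GL_{m+p}(k) and λ ∈ k satisfy Aᵀ = λ·A and ρ(σ(h)) = χ(h)·A·(ρ(h)ᵀ)⁻¹·A⁻¹ for all h ∈ H. Suppose further that the only m×p matrix M over k with r(σ(h))·M = χ(h)·M·(s(h)ᵀ)⁻¹ for all h ∈ H is M = 0, and the only p×m matrix N over k with s(σ(h))·N = χ(h)·N·(r(h)ᵀ)⁻¹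 for all h ∈ H is N = 0. Then the upper-left m×m block A_r of A is invertible, r(σ(h)) = χ(h)·A_r·(r(h)ᵀ)⁻¹·A_r⁻¹ for all h ∈ H, and A_rᵀ = λ·A_r. -/
open Matrix

/-!
Multiplying the polarisation identity on the right by `A` gives
`ρ(σ h) * A = χ(h) • (A * (ρ(h)ᵀ)⁻¹)`. Read block by block, the lower-left block of `A`
intertwines `s ∘ σ` with `χ ⊗ r^∨`, so it vanishes; `A` is then block upper triangular, hence
`A_r` is invertible, the upper-left block of the identity is the polarisation of `r`, and
`A_rᵀ = λ • A_r` is the upper-left block of `Aᵀ = λ • A`.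
-/

namespace Matrix

variable {α m n : Type*} [CommRing α] [Fintype m] [Fintype n]

theorem inv_transpose_fromBlocks_zero_zero [DecidableEq m] [DecidableEq n]
    {X : Matrix m m α} {Y : Matrix n n α} (hX : IsUnit X) (hY : IsUnit Y) :
    ((fromBlocks X 0 0 Y)ᵀ)⁻¹ = fromBlocks (Xᵀ)⁻¹ 0 0 (Yᵀ)⁻¹ := by
  rw [fromBlocks_transpose, transpose_zero, transpose_zero,
    inv_fromBlocks_zero₂₁_of_isUnit_iff _ _ _
      (iff_of_true ((isUnit_transpose _).2 hX) ((isUnit_transpose _).2 hY))]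
  simp

theorem eq_smul_mul_mul_inv_iff_mul_eq [DecidableEq m] {A P Q : Matrix m m α} (c : α)
    (hA : IsUnit A) : P = c • (A * Q * A⁻¹) ↔ P * A = c • (A * Q) := by
  have hA' : IsUnit A.det := (isUnit_iff_isUnit_det A).mp hA
  constructor
  · rintro rfl
    rw [smul_mul_assoc, mul_assoc, nonsing_inv_mul _ hA', mul_one]
  · intro h
    rw [← smul_mul_assoc, ← h, mul_assoc, mul_nonsing_inv _ hA', mul_one]

theorem fromBlocks_zero_zero_mul_eq_smul_mul_fromBlocks_zero_zero_iff
    {P₁ Q₁ : Matrix m m α} {P₂ Q₂ : Matrix n n α} (A : Matrix (m ⊕ n) (m ⊕ n) α) (c : α) :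
    fromBlocks P₁ 0 0 P₂ * A = c • (A * fromBlocks Q₁ 0 0 Q₂) ↔
      P₁ * A.toBlocks₁₁ = c • (A.toBlocks₁₁ * Q₁) ∧
      P₁ * A.toBlocks₁₂ = c • (A.toBlocks₁₂ * Q₂) ∧
      P₂ * A.toBlocks₂₁ = c • (A.toBlocks₂₁ * Q₁) ∧
      P₂ * A.toBlocks₂₂ = c • (A.toBlocks₂₂ * Q₂) := by
  conv_lhs => rw [← fromBlocks_toBlocks A, fromBlocks_multiply, fromBlocks_multiply,
    fromBlocks_smul, fromBlocks_inj]
  simp only [Matrix.zero_mul, Matrix.mul_zero, add_zero, zero_add]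

theorem isUnit_toBlocks₁₁_of_toBlocks₂₁_eq_zero [DecidableEq m] [DecidableEq n]
    {A : Matrix (m ⊕ n) (m ⊕ n) α} (hA : IsUnit A) (h₂₁ : A.toBlocks₂₁ = 0) :
    IsUnit A.toBlocks₁₁ := by
  rw [← fromBlocks_toBlocks A, h₂₁, isUnit_fromBlocks_zero₂₁] at hA
  exact hA.1

end Matrix

theorem stmt_13_general (k : Type*) [Field k] (m p : ℕ) (H : Type*) [Group H]
    (σ : H →* H)
    (χ : H →* kˣ)
    (r : H →* GL (Fin m) k) (s : H →* GL (Fin p) k)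
    (ρ : H → Matrix (Fin m ⊕ Fin p) (Fin m ⊕ Fin p) k)
    (hρ : ∀ h, ρ h = Matrix.fromBlocks (r h : Matrix (Fin m) (Fin m) k) 0 0
      (s h : Matrix (Fin p) (Fin p) k))
    (A : Matrix (Fin m ⊕ Fin p) (Fin m ⊕ Fin p) k) (hA : IsUnit A)
    (lam : k) (hAt : Aᵀ = lam • A)
    (hpol : ∀ h, ρ (σ h) = (χ h : k) • (A * ((ρ h)ᵀ)⁻¹ * A⁻¹))
    (hN : ∀ N : Matrix (Fin p) (Fin m) k,
      (∀ h, (s (σ h) : Matrix (Fin p) (Fin p) k) * N =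
        (χ h : k) • (N * ((r h : Matrix (Fin m) (Fin m) k)ᵀ)⁻¹)) → N = 0) :
    IsUnit A.toBlocks₁₁ ∧
    (∀ h, (r (σ h) : Matrix (Fin m) (Fin m) k) =
      (χ h : k) • (A.toBlocks₁₁ * ((r h : Matrix (Fin m) (Fin m) k)ᵀ)⁻¹ *
        (A.toBlocks₁₁)⁻¹)) ∧
    (A.toBlocks₁₁)ᵀ = lam • A.toBlocks₁₁ := by
  have hblocks := fun h ↦ by
    have hpol' := (eq_smul_mul_mul_inv_iff_mul_eq _ hA).1 (hpol h)
    rw [hρ, hρ, inv_transpose_fromBlocks_zero_zero (r h).isUnit (s h).isUnit] at hpol'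
    exact (fromBlocks_zero_zero_mul_eq_smul_mul_fromBlocks_zero_zero_iff A _).1 hpol'
  have h₂₁ : A.toBlocks₂₁ = 0 := hN _ fun h ↦ (hblocks h).2.2.1
  have h₁₁ : IsUnit A.toBlocks₁₁ := isUnit_toBlocks₁₁_of_toBlocks₂₁_eq_zero hA h₂₁
  exact ⟨h₁₁, fun h ↦ (eq_smul_mul_mul_inv_iff_mul_eq _ h₁₁).2 (hblocks h).1,
    congrArg toBlocks₁₁ hAt⟩

/-- a polarisation determines the sign of a multiplicity-one constituent:
if `A` polarises `ρ = blockdiag(r, s)` with sign `λ`, and there are no nonzero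
intertwiners between the two blocks, then the upper-left block `A_r` of `A` is
invertible, polarises `r`, and satisfies `A_rᵀ = λ·A_r`. -/
theorem stmt_13 (k : Type*) [Field k] (m p : ℕ) (H : Type*) [Group H]
    (σ : H →* H) (hσ : ∀ h, σ (σ h) = h)
    (χ : H →* kˣ)
    (r : H →* GL (Fin m) k) (s : H →* GL (Fin p) k)
    (ρ : H → Matrix (Fin m ⊕ Fin p) (Fin m ⊕ Fin p) k)
    (hρ : ∀ h, ρ h = Matrix.fromBlocks (r h : Matrix (Fin m) (Fin m) k) 0 0
      (s h : Matrix (Fin p) (Fin p) k))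
    (A : Matrix (Fin m ⊕ Fin p) (Fin m ⊕ Fin p) k) (hA : IsUnit A)
    (lam : k) (hAt : Aᵀ = lam • A)
    (hpol : ∀ h, ρ (σ h) = (χ h : k) • (A * ((ρ h)ᵀ)⁻¹ * A⁻¹))
    (hM : ∀ M : Matrix (Fin m) (Fin p) k,
      (∀ h, (r (σ h) : Matrix (Fin m) (Fin m) k) * M =
        (χ h : k) • (M * ((s h : Matrix (Fin p) (Fin p) k)ᵀ)⁻¹)) → M = 0)
    (hN : ∀ N : Matrix (Fin p) (Fin m) k,
      (∀ h, (s (σ h) : Matrix (Fin p) (Fin p) k) * N =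
        (χ h : k) • (N * ((r h : Matrix (Fin m) (Fin m) k)ᵀ)⁻¹)) → N = 0) :
    IsUnit A.toBlocks₁₁ ∧
    (∀ h, (r (σ h) : Matrix (Fin m) (Fin m) k) =
      (χ h : k) • (A.toBlocks₁₁ * ((r h : Matrix (Fin m) (Fin m) k)ᵀ)⁻¹ *
        (A.toBlocks₁₁)⁻¹)) ∧
    (A.toBlocks₁₁)ᵀ = lam • A.toBlocks₁₁ :=
  stmt_13_general k m p H σ χ r s ρ hρ A hA lam hAt hpol hN
end
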